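/- Let (W,w) be a Riesz fusion basis for H, let v be a family of weights, and let (V,v) be a Q-dual fusion frame of (W,w) with Q block-diagonal. Then S_{W,w}^{-1} W_i ⊆ V_i for each i = 1,…,m. -/

import Mathlib

/-!
If `S_{W,w} x ∈ Wᵢ`, then `Σⱼ wⱼ² π_{Wⱼ} x ∈ Wᵢ`, and independence of the `Wⱼ` kills every summand
with `j ≠ i`; hence `T*_{W,w} x` lives in the `i`-th block of `𝒲`. A block-diagonal `Q` keeps it in
the `i`-th block of `𝒱`, so `x = T_{V,v} Q T*_{W,w} x` is a multiple of a vector of `Vᵢ`.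
-/

noncomputable section

open scoped InnerProductSpace

variable {𝕜 : Type} [RCLike 𝕜]
variable {H : Type} [NormedAddCommGroup H] [InnerProductSpace 𝕜 H] [FiniteDimensional 𝕜 H]
variable {m : ℕ}

/-- The Hilbert space `𝒲 = ⊕ᵢ Wᵢ` of a fusion sequence, with the ℓ² inner product. -/
abbrev FFSpace (W : Fin m → Submodule 𝕜 H) : Type := PiLp 2 (fun i => ↥(W i))

/-- The synthesis operator `T_{W,w} : 𝒲 → H`, `(fᵢ)ᵢ ↦ Σᵢ wᵢ fᵢ`. -/
def synthOp (W : Fin m → Submodule 𝕜 H) (w : Fin m → ℝ) : FFSpace W →ₗ[𝕜] H where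
  toFun f := ∑ i, (w i : 𝕜) • (f i : H)
  map_add' f g := by
    simp [Finset.sum_add_distrib, smul_add]
  map_smul' c f := by
    simp [Finset.smul_sum]
    congr 1; funext i; rw [smul_comm]

/-- The analysis operator `T*_{W,w} : H → 𝒲`, `f ↦ (wᵢ π_{Wᵢ} f)ᵢ`. -/
def analysisOp (W : Fin m → Submodule 𝕜 H) (w : Fin m → ℝ) : H →ₗ[𝕜] FFSpace W where
  toFun f := WithLp.toLp 2 (fun i => (w i : 𝕜) • ((W i).orthogonalProjectionOnto f))
  map_add' f g := by
    ext i; simp [smul_add]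
  map_smul' c f := by
    ext i; simp; rw [smul_comm]

/-- The coordinate operator `M_{J,W} : 𝒲 → 𝒲`, keeping the coordinates in `J`. -/
def MJ (W : Fin m → Submodule 𝕜 H) (J : Finset (Fin m)) : FFSpace W →ₗ[𝕜] FFSpace W where
  toFun f := WithLp.toLp 2 (fun j => if j ∈ J then f j else 0)
  map_add' f g := by
    ext j; by_cases h : j ∈ J <;> simp [h]
  map_smul' c f := by
    ext j; by_cases h : j ∈ J <;> simp [h]

/-- `Q : 𝒲 → 𝒱` is block-diagonal if `Q M_{j,W} 𝒲 ⊆ M_{j,V} 𝒱` for all `j`. -/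
def IsBlockDiagonal (W V : Fin m → Submodule 𝕜 H) (Q : FFSpace W →ₗ[𝕜] FFSpace V) : Prop :=
  ∀ j, LinearMap.range (Q ∘ₗ MJ W {j}) ≤ LinearMap.range (MJ V {j})

/-- `Q : 𝒲 → 𝒱` is component preserving if `Q M_{j,W} 𝒲 = M_{j,V} 𝒱` for all `j`. -/
def IsComponentPreserving (W V : Fin m → Submodule 𝕜 H) (Q : FFSpace W →ₗ[𝕜] FFSpace V) : Prop :=
  ∀ j, LinearMap.range (Q ∘ₗ MJ W {j}) = LinearMap.range (MJ V {j})

/-- The orthogonal projection onto `U` as an endomorphism of `H`. -/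
def projL (U : Submodule 𝕜 H) : H →ₗ[𝕜] H :=
  U.subtype ∘ₗ (U.orthogonalProjectionOnto : H →L[𝕜] U).toLinearMap

/-- The fusion frame operator `S_{W,w} = Σᵢ wᵢ² π_{Wᵢ}`. -/
def fusionFrameOp (W : Fin m → Submodule 𝕜 H) (w : Fin m → ℝ) : H →ₗ[𝕜] H :=
  ∑ i, ((w i ^ 2 : ℝ) : 𝕜) • projL (W i)

theorem iSupIndep.eq_zero_of_sum_mem {ι R M : Type*} [Fintype ι] [Ring R] [AddCommGroup M]
    [Module R M] {W : ι → Submodule R M} (hW : iSupIndep W) {g : ι → M} (hg : ∀ k, g k ∈ W k)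
    {i j : ι} (hji : j ≠ i) (hsum : ∑ k, g k ∈ W i) : g j = 0 := by
  classical
  have hsplit : g j = ∑ k, g k - ∑ k ∈ Finset.univ.erase j, g k := by
    rw [← Finset.add_sum_erase _ _ (Finset.mem_univ j)]
    abel
  have hmem : g j ∈ ⨆ k, ⨆ (_ : k ≠ j), W k := by
    rw [hsplit]
    refine Submodule.sub_mem _ (Submodule.mem_iSup_of_mem i
      (Submodule.mem_iSup_of_mem hji.symm hsum)) (Submodule.sum_mem _ fun k hk => ?_)
    exact Submodule.mem_iSup_of_mem k
      (Submodule.mem_iSup_of_mem (Finset.mem_erase.mp hk).1 (hg k))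
  exact Submodule.disjoint_def.mp (hW j) _ (hg j) hmem

theorem fusionFrameOp_apply (W : Fin m → Submodule 𝕜 H) (w : Fin m → ℝ) (x : H) :
    fusionFrameOp W w x = ∑ j, ((w j ^ 2 : ℝ) : 𝕜) • (W j).starProjection x := by
  simp [fusionFrameOp, projL]

omit [FiniteDimensional 𝕜 H] in
theorem synthOp_MJ_singleton (V : Fin m → Submodule 𝕜 H) (v : Fin m → ℝ) (i : Fin m)
    (f : FFSpace V) : synthOp V v (MJ V {i} f) = (v i : 𝕜) • (f i : H) := by
  simp only [synthOp, LinearMap.coe_mk, AddHom.coe_mk]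
  rw [Finset.sum_eq_single_of_mem i (Finset.mem_univ i) fun j _ hji => by simp [MJ, hji]]
  simp [MJ]

omit [FiniteDimensional 𝕜 H] in
theorem synthOp_mem_of_mem_range_MJ_singleton (V : Fin m → Submodule 𝕜 H) (v : Fin m → ℝ)
    {i : Fin m} {f : FFSpace V} (hf : f ∈ LinearMap.range (MJ V {i})) : synthOp V v f ∈ V i := by
  obtain ⟨f, rfl⟩ := hf
  rw [synthOp_MJ_singleton]
  exact Submodule.smul_mem _ _ (f i).2

theorem analysisOp_mem_range_MJ_singleton {W : Fin m → Submodule 𝕜 H} (hW : iSupIndep W)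
    (w : Fin m → ℝ) {i : Fin m} {x : H} (hx : fusionFrameOp W w x ∈ W i) :
    analysisOp W w x ∈ LinearMap.range (MJ W {i}) := by
  refine ⟨analysisOp W w x, ?_⟩
  ext j
  by_cases hji : j = i
  · simp [MJ, hji]
  · have hsq : ((w j ^ 2 : ℝ) : 𝕜) • (W j).starProjection x = 0 :=
      hW.eq_zero_of_sum_mem (g := fun k => ((w k ^ 2 : ℝ) : 𝕜) • (W k).starProjection x)
        (fun k => Submodule.smul_mem _ _ ((W k).starProjection_apply_mem x)) hji
        (fusionFrameOp_apply W w x ▸ hx)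
    have hcomp : (w j : 𝕜) • (W j).starProjection x = 0 := by
      rcases smul_eq_zero.mp hsq with hw | hp
      · simp_all
      · simp [hp]
    simp [MJ, hji, analysisOp, hcomp.symm]

omit [FiniteDimensional 𝕜 H] in
theorem IsBlockDiagonal.map_mem_range_MJ_singleton {W V : Fin m → Submodule 𝕜 H}
    {Q : FFSpace W →ₗ[𝕜] FFSpace V} (hQ : IsBlockDiagonal W V Q) {i : Fin m} {f : FFSpace W}
    (hf : f ∈ LinearMap.range (MJ W {i})) : Q f ∈ LinearMap.range (MJ V {i}) := by
  obtain ⟨g, rfl⟩ := hf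
  exact hQ i ⟨g, rfl⟩

theorem comap_fusionFrameOp_le_of_blockDiagonal_dual_general
    {𝕜 : Type} [RCLike 𝕜] {H : Type} [NormedAddCommGroup H] [InnerProductSpace 𝕜 H]
    [FiniteDimensional 𝕜 H] {m : ℕ}
    (W : Fin m → Submodule 𝕜 H) (w : Fin m → ℝ)
    (hRiesz : iSupIndep W ∧ ⨆ i, W i = ⊤)
    (V : Fin m → Submodule 𝕜 H) (v : Fin m → ℝ)
    (Q : FFSpace W →ₗ[𝕜] FFSpace V)
    (hdual : synthOp V v ∘ₗ Q ∘ₗ analysisOp W w = LinearMap.id)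
    (hbd : IsBlockDiagonal W V Q) :
    ∀ i, Submodule.comap (fusionFrameOp W w) (W i) ≤ V i := by
  intro i x hx
  have hx_eq : synthOp V v (Q (analysisOp W w x)) = x := LinearMap.congr_fun hdual x
  rw [← hx_eq]
  exact synthOp_mem_of_mem_range_MJ_singleton V v
    (hbd.map_mem_range_MJ_singleton (analysisOp_mem_range_MJ_singleton hRiesz.1 w hx))

/-- if `(W,w)` is a Riesz fusion basis and `(V,v)` is a block-diagonal
`Q`-dual fusion frame of `(W,w)`, then `S_{W,w}⁻¹ Wᵢ ⊆ Vᵢ` for each `i`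
(`S_{W,w}⁻¹ Wᵢ` is expressed as the preimage of `Wᵢ` under `S_{W,w}`, which is bijective). -/
theorem comap_fusionFrameOp_le_of_blockDiagonal_dual
    {𝕜 : Type} [RCLike 𝕜] {H : Type} [NormedAddCommGroup H] [InnerProductSpace 𝕜 H]
    [FiniteDimensional 𝕜 H] {m : ℕ}
    (W : Fin m → Submodule 𝕜 H) (w : Fin m → ℝ) (hw : ∀ i, 0 < w i)
    (hRiesz : iSupIndep W ∧ ⨆ i, W i = ⊤)
    (V : Fin m → Submodule 𝕜 H) (v : Fin m → ℝ) (hv : ∀ i, 0 < v i) (hV : ⨆ i, V i = ⊤)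
    (Q : FFSpace W →ₗ[𝕜] FFSpace V)
    (hdual : synthOp V v ∘ₗ Q ∘ₗ analysisOp W w = LinearMap.id)
    (hbd : IsBlockDiagonal W V Q) :
    ∀ i, Submodule.comap (fusionFrameOp W w) (W i) ≤ V i :=
  comap_fusionFrameOp_le_of_blockDiagonal_dual_general W w hRiesz V v Q hdual hbd
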